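/- arXiv:2307.06712 — 3 statements merged into one kernel-verified Lean document; each statement's English description precedes it below -/
import Mathlib

section
/- Let H be a Hilbert space and T a self-adjoint operator on H that is bounded below, with eigenvalues λ_1 ≤ λ_2 ≤ ... below the essential spectrum. Suppose there exist vectors u_1,...,u_n in the domain of T and constants ε, δ > 0 with δ < 1/(2n) such that ‖T u_i‖ ≤ ε for all i, |⟨u_i,u_j⟩ - δ_{ij}| ≤ δ for all i,j, and λ_{n+1}(T) > 0 exists. Then λ_n(T) ≤ 2n ε / (1 - 2nδ) (in particular, the n-th min-max value is bounded by a constant times ε). -/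
/-- The `n`-th min-max value of an operator `T` on a Hilbert space:
the infimum over `n`-dimensional subspaces `M` of the supremum of the
Rayleigh quotient `re ⟪Tφ, φ⟫` over unit vectors `φ ∈ M`. -/
noncomputable def minmaxValue {H : Type*} [NormedAddCommGroup H] [InnerProductSpace ℂ H]
    (T : H →L[ℂ] H) (n : ℕ) : ℝ :=
  sInf { c : ℝ | ∃ M : Submodule ℂ H, Module.finrank ℂ M = n ∧
    c = sSup { r : ℝ | ∃ φ : H, φ ∈ M ∧ ‖φ‖ = 1 ∧ r = Complex.re (inner ℂ (T φ) φ : ℂ) } }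

/-! If the Gram matrix of `u` is `δ`-close to the identity, then `φ = ∑ cᵢ uᵢ` satisfies
`‖φ‖² ≥ (1 - nδ) ∑ ‖cᵢ‖²`. Hence the `uᵢ` span an `n`-dimensional subspace, on whose unit sphere
`∑ ‖cᵢ‖ ≤ 2n` once `2nδ ≤ 1`, so that `re ⟪Tφ, φ⟫ ≤ ‖Tφ‖ ≤ 2nε` there. Plugging this subspace into
the min-max formula gives the bound; the infimum in it is a genuine one (not the junk value of an
unbounded set) because every Rayleigh quotient of the bounded operator `T` is at least `-‖T‖`. -/

open Finset RCLike ComplexConjugate InnerProductSpace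

section
variable {𝕜 E ι : Type*} [RCLike 𝕜] [NormedAddCommGroup E] [InnerProductSpace 𝕜 E] [Fintype ι]
  [DecidableEq ι]

lemma Submodule.exists_mem_norm_eq_one_of_finrank_pos {M : Submodule 𝕜 E}
    (hM : 0 < Module.finrank 𝕜 M) : ∃ x ∈ M, ‖x‖ = 1 := by
  have := Module.finite_of_finrank_pos hM
  obtain ⟨⟨x, hxM⟩, hx⟩ := Module.finrank_pos_iff_exists_ne_zero.mp hM
  have hx0 : x ≠ 0 := fun h => hx (Subtype.ext h)
  exact ⟨(‖x‖ : 𝕜)⁻¹ • x, M.smul_mem _ hxM, norm_smul_inv_norm hx0⟩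

lemma inner_sum_smul_self_sub_sum_norm_sq (u : ι → E) (c : ι → 𝕜) :
    ⟪∑ i, c i • u i, ∑ i, c i • u i⟫_𝕜 - ∑ i, (‖c i‖ : 𝕜) ^ 2
      = ∑ i, ∑ j, conj (c i) * c j * (⟪u i, u j⟫_𝕜 - if i = j then 1 else 0) := by
  simp only [sum_inner, inner_sum, inner_smul_left, inner_smul_right, mul_sub, mul_ite, mul_one,
    mul_zero, sum_sub_distrib, sum_ite_eq, mem_univ, if_true, RCLike.conj_mul]
  rw [sum_comm]
  simp only [mul_sum, mul_left_comm, mul_assoc]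

lemma abs_norm_sq_sum_smul_sub_le {u : ι → E} {δ : ℝ}
    (hgram : ∀ i j, ‖⟪u i, u j⟫_𝕜 - if i = j then 1 else 0‖ ≤ δ) (c : ι → 𝕜) :
    |‖∑ i, c i • u i‖ ^ 2 - ∑ i, ‖c i‖ ^ 2| ≤ δ * (∑ i, ‖c i‖) ^ 2 := by
  have hre : ‖∑ i, c i • u i‖ ^ 2 - ∑ i, ‖c i‖ ^ 2
      = re (⟪∑ i, c i • u i, ∑ i, c i • u i⟫_𝕜 - ∑ i, (‖c i‖ : 𝕜) ^ 2) := by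
    rw [map_sub, map_sum, inner_self_eq_norm_sq_to_K]
    simp only [← RCLike.ofReal_pow, RCLike.ofReal_re]
  calc |‖∑ i, c i • u i‖ ^ 2 - ∑ i, ‖c i‖ ^ 2|
      ≤ ‖⟪∑ i, c i • u i, ∑ i, c i • u i⟫_𝕜 - ∑ i, (‖c i‖ : 𝕜) ^ 2‖ :=
        hre ▸ RCLike.abs_re_le_norm _
    _ ≤ ∑ i, ∑ j, ‖c i‖ * ‖c j‖ * δ := by
        rw [inner_sum_smul_self_sub_sum_norm_sq]
        refine (norm_sum_le _ _).trans (sum_le_sum fun i _ => (norm_sum_le _ _).trans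
          (sum_le_sum fun j _ => ?_))
        rw [norm_mul, norm_mul, RCLike.norm_conj]
        exact mul_le_mul_of_nonneg_left (hgram i j) (by positivity)
    _ = δ * (∑ i, ‖c i‖) ^ 2 := by
        rw [sq, sum_mul_sum, mul_sum]
        simp only [mul_comm δ, sum_mul]

lemma mul_sum_norm_sq_le_norm_sq_sum_smul {u : ι → E} {δ : ℝ} (hδ : 0 ≤ δ)
    (hgram : ∀ i j, ‖⟪u i, u j⟫_𝕜 - if i = j then 1 else 0‖ ≤ δ) (c : ι → 𝕜) :
    (1 - Fintype.card ι * δ) * ∑ i, ‖c i‖ ^ 2 ≤ ‖∑ i, c i • u i‖ ^ 2 := by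
  have hgap := (abs_le.mp (abs_norm_sq_sum_smul_sub_le hgram c)).1
  have hcs : (∑ i, ‖c i‖) ^ 2 ≤ Fintype.card ι * ∑ i, ‖c i‖ ^ 2 := by
    simpa using sq_sum_le_card_mul_sum_sq (s := univ) (f := fun i => ‖c i‖)
  nlinarith [mul_le_mul_of_nonneg_left hcs hδ]

lemma linearIndependent_of_gram_near_id {u : ι → E} {δ : ℝ} (hδ : 0 ≤ δ)
    (hgram : ∀ i j, ‖⟪u i, u j⟫_𝕜 - if i = j then 1 else 0‖ ≤ δ)
    (hsmall : Fintype.card ι * δ < 1) : LinearIndependent 𝕜 u := by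
  refine Fintype.linearIndependent_iff.mpr fun c hc i =>
    norm_eq_zero.mp <| (pow_eq_zero_iff two_ne_zero).mp ?_
  have hle := mul_sum_norm_sq_le_norm_sq_sum_smul hδ hgram c
  rw [hc, norm_zero, zero_pow two_ne_zero] at hle
  have hsum : ∑ j, ‖c j‖ ^ 2 = 0 :=
    le_antisymm (nonpos_of_mul_nonpos_right hle (by linarith)) (by positivity)
  exact (sum_eq_zero_iff_of_nonneg fun j _ => by positivity).mp hsum i (mem_univ i)

lemma sum_norm_le_of_norm_sum_smul_eq_one {u : ι → E} {δ : ℝ} (hδ : 0 ≤ δ)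
    (hgram : ∀ i j, ‖⟪u i, u j⟫_𝕜 - if i = j then 1 else 0‖ ≤ δ)
    (hsmall : 2 * Fintype.card ι * δ ≤ 1) {c : ι → 𝕜} (hc : ‖∑ i, c i • u i‖ = 1) :
    ∑ i, ‖c i‖ ≤ 2 * Fintype.card ι := by
  have hle := mul_sum_norm_sq_le_norm_sq_sum_smul hδ hgram c
  rw [hc, one_pow] at hle
  have hcs : (∑ i, ‖c i‖) ^ 2 ≤ Fintype.card ι * ∑ i, ‖c i‖ ^ 2 := by
    simpa using sq_sum_le_card_mul_sum_sq (s := univ) (f := fun i => ‖c i‖)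
  have hcard : (Fintype.card ι : ℝ) ≤ (Fintype.card ι : ℝ) ^ 2 := by
    exact_mod_cast Nat.le_self_pow two_ne_zero _
  have hq : ∑ i, ‖c i‖ ^ 2 ≤ 2 := by
    nlinarith [sum_nonneg fun i (_ : i ∈ univ) => sq_nonneg ‖c i‖]
  nlinarith [sum_nonneg fun i (_ : i ∈ univ) => norm_nonneg (c i)]

lemma re_inner_apply_self_le_of_mem_span (T : E →L[𝕜] E) {u : ι → E} {ε δ : ℝ} (hε : 0 ≤ ε)
    (hδ : 0 ≤ δ) (hTu : ∀ i, ‖T (u i)‖ ≤ ε)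
    (hgram : ∀ i j, ‖⟪u i, u j⟫_𝕜 - if i = j then 1 else 0‖ ≤ δ)
    (hsmall : 2 * Fintype.card ι * δ ≤ 1) {φ : E} (hφ : φ ∈ Submodule.span 𝕜 (Set.range u))
    (hφ1 : ‖φ‖ = 1) : re ⟪T φ, φ⟫_𝕜 ≤ 2 * Fintype.card ι * ε := by
  obtain ⟨c, rfl⟩ := (Submodule.mem_span_range_iff_exists_fun 𝕜).mp hφ
  calc re ⟪T (∑ i, c i • u i), ∑ i, c i • u i⟫_𝕜 ≤ ‖T (∑ i, c i • u i)‖ := by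
        simpa [hφ1] using re_inner_le_norm (T (∑ i, c i • u i)) (∑ i, c i • u i)
    _ ≤ ∑ i, ‖c i‖ * ε := by
        simp only [map_sum, map_smul]
        exact (norm_sum_le _ _).trans (sum_le_sum fun i _ =>
          (norm_smul_le _ _).trans (mul_le_mul_of_nonneg_left (hTu i) (norm_nonneg _)))
    _ ≤ 2 * Fintype.card ι * ε := by
        rw [← sum_mul]
        exact mul_le_mul_of_nonneg_right
          (sum_norm_le_of_norm_sum_smul_eq_one hδ hgram hsmall hφ1) hε

end

section
variable {H : Type*} [NormedAddCommGroup H] [InnerProductSpace ℂ H]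

lemma abs_re_inner_apply_self_le_opNorm (T : H →L[ℂ] H) {φ : H} (hφ : ‖φ‖ = 1) :
    |Complex.re ⟪T φ, φ⟫_ℂ| ≤ ‖T‖ :=
  (Complex.abs_re_le_norm _).trans <| (norm_inner_le_norm _ _).trans <| by
    simpa [hφ] using T.le_opNorm φ

lemma minmaxValue_le_of_forall_re_inner_le (T : H →L[ℂ] H) {n : ℕ} (hn : 0 < n)
    {M : Submodule ℂ H} (hM : Module.finrank ℂ M = n) {B : ℝ}
    (hB : ∀ φ ∈ M, ‖φ‖ = 1 → Complex.re ⟪T φ, φ⟫_ℂ ≤ B) : minmaxValue T n ≤ B := by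
  have hbddAbove (M' : Submodule ℂ H) :
      BddAbove {r : ℝ | ∃ φ : H, φ ∈ M' ∧ ‖φ‖ = 1 ∧ r = Complex.re ⟪T φ, φ⟫_ℂ} := by
    refine ⟨‖T‖, ?_⟩
    rintro _ ⟨φ, -, hφ1, rfl⟩
    exact (le_abs_self _).trans (abs_re_inner_apply_self_le_opNorm T hφ1)
  unfold minmaxValue
  refine csInf_le_of_le ?_ ⟨M, hM, rfl⟩ ?_
  · refine ⟨-‖T‖, ?_⟩
    rintro _ ⟨M', hM', rfl⟩
    obtain ⟨φ, hφM, hφ1⟩ := Submodule.exists_mem_norm_eq_one_of_finrank_pos (hM' ▸ hn)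
    exact (neg_le_of_abs_le (abs_re_inner_apply_self_le_opNorm T hφ1)).trans
      (le_csSup (hbddAbove M') ⟨φ, hφM, hφ1, rfl⟩)
  · obtain ⟨φ, hφM, hφ1⟩ := Submodule.exists_mem_norm_eq_one_of_finrank_pos (hM ▸ hn)
    refine csSup_le ⟨_, φ, hφM, hφ1, rfl⟩ ?_
    rintro _ ⟨ψ, hψM, hψ1, rfl⟩
    exact hB ψ hψM hψ1

end

theorem stmt0_general {H : Type*} [NormedAddCommGroup H] [InnerProductSpace ℂ H]
    (T : H →L[ℂ] H)
    (n : ℕ) (hn : 1 ≤ n) (u : Fin n → H) (ε δ : ℝ) (hε : 0 < ε) (hδ : 0 < δ)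
    (hδ' : δ < 1 / (2 * n))
    (hTu : ∀ i, ‖T (u i)‖ ≤ ε)
    (hgram : ∀ i j, ‖(inner ℂ (u i) (u j) : ℂ) - (if i = j then 1 else 0)‖ ≤ δ) :
    minmaxValue T n ≤ 2 * n * ε / (1 - 2 * n * δ) := by
  have hsmall : 2 * n * δ < 1 := by rwa [lt_div_iff₀ (by positivity), mul_comm] at hδ'
  have hli : LinearIndependent ℂ u :=
    linearIndependent_of_gram_near_id hδ.le hgram (by simp only [Fintype.card_fin]; nlinarith)
  calc minmaxValue T n ≤ 2 * n * ε :=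
        minmaxValue_le_of_forall_re_inner_le T hn (by simpa using finrank_span_eq_card hli)
          fun φ hφ hφ1 => by
            simpa using re_inner_apply_self_le_of_mem_span T hε.le hδ.le hTu hgram
              (by simpa using hsmall.le) hφ hφ1
    _ ≤ 2 * n * ε / (1 - 2 * n * δ) :=
        le_div_self (by positivity) (by linarith) (by linarith [show 0 ≤ (n : ℝ) * δ by positivity])

/-- if `T` is a self-adjoint operator bounded from below, and `u 1, …, u n`
are quasi-modes with `‖T (u i)‖ ≤ ε` and Gram matrix `δ`-close to the identity with
`δ < 1/(2n)`, and the `(n+1)`-st min-max value is positive, then the `n`-th min-max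
value is at most `2 n ε / (1 - 2 n δ)`. -/
theorem stmt0 {H : Type*} [NormedAddCommGroup H] [InnerProductSpace ℂ H] [CompleteSpace H]
    (T : H →L[ℂ] H) (hT : IsSelfAdjoint T)
    (hbdd : ∃ c : ℝ, ∀ x : H, c * ‖x‖ ^ 2 ≤ Complex.re (inner ℂ (T x) x : ℂ))
    (n : ℕ) (hn : 1 ≤ n) (u : Fin n → H) (ε δ : ℝ) (hε : 0 < ε) (hδ : 0 < δ)
    (hδ' : δ < 1 / (2 * n))
    (hTu : ∀ i, ‖T (u i)‖ ≤ ε)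
    (hgram : ∀ i j, ‖(inner ℂ (u i) (u j) : ℂ) - (if i = j then 1 else 0)‖ ≤ δ)
    (hpos : 0 < minmaxValue T (n + 1)) :
    minmaxValue T n ≤ 2 * n * ε / (1 - 2 * n * δ) :=
  stmt0_general T n hn u ε δ hε hδ hδ' hTu hgram
end

section
/- Let v_0 : [0,∞) → R be continuous, nonpositive, vanishing on [a,∞), with minimum v_min < 0, and let L > 2a. Define d(r) = ∫_0^r √(ρ²/4 + v_0(ρ) - v_min) dρ, S_0 = d(L), S_a = d(a) + d(L-a), Ŝ_a = d(L-a), and Ŝ = inf_{0<r<a} [Lr/2 + d(r) + d(L-r)]. Then Ŝ_a < S_a and Ŝ < S_0. -/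
open Set Filter Topology

/-!
The first inequality is `d a > 0`: the integrand is at least `ρ / 2`.
For the second put `g ρ = √(ρ²/4 + v₀ ρ - v_min)` and
`F r = L r / 2 + d r + d (L - r)`. Then `F 0 = d L`, and `F` has right derivative
`L / 2 + g 0 - g L = L / 2 - √(L²/4 - v_min) < 0` at `0` because `g 0 = 0`, so `F r < d L`
for every small `r > 0`, and `Ŝ ≤ F r`.
-/

theorem HasDerivWithinAt.eventually_lt_of_neg {f : ℝ → ℝ} {f' x : ℝ}
    (hf : HasDerivWithinAt f f' (Ici x) x) (hf' : f' < 0) : ∀ᶠ z in 𝓝[>] x, f z < f x := by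
  filter_upwards [hf.Ioi_of_Ici.limsup_slope_le' (lt_irrefl x) hf', self_mem_nhdsWithin]
    with z hslope hz
  rw [slope_def_field, div_lt_iff₀ (sub_pos.2 hz)] at hslope
  linarith

theorem eventually_mul_add_integral_add_integral_lt {g : ℝ → ℝ} (hg : ContinuousOn g (Ici 0))
    {L c : ℝ} (hL : 0 < L) (hc : c + g 0 < g L) :
    ∀ᶠ r in 𝓝[>] 0,
      c * r + (∫ x in (0 : ℝ)..r, g x) + ∫ x in (0 : ℝ)..L - r, g x < ∫ x in (0 : ℝ)..L, g x := by
  have hD0 : HasDerivWithinAt (fun u => ∫ x in (0 : ℝ)..u, g x) (g 0) (Ici 0) 0 :=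
    intervalIntegral.integral_hasDerivWithinAt_right IntervalIntegrable.refl
      ((hg.mono Ioi_subset_Ici_self).stronglyMeasurableAtFilter_nhdsWithin measurableSet_Ioi 0)
      ((hg 0 self_mem_Ici).mono Ioi_subset_Ici_self)
  have hDL : HasDerivAt (fun u => ∫ x in (0 : ℝ)..u, g x) (g L) (L - 0) := by
    rw [sub_zero]
    exact intervalIntegral.integral_hasDerivAt_right
      (hg.mono Icc_subset_Ici_self |>.intervalIntegrable_of_Icc hL.le)
      ((hg.mono Ioi_subset_Ici_self).stronglyMeasurableAtFilter isOpen_Ioi L hL)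
      (hg.continuousAt (Ici_mem_nhds hL))
  have hF := ((((hasDerivAt_id (0 : ℝ)).const_mul c).hasDerivWithinAt).add hD0).add
    (hDL.comp_const_sub L 0).hasDerivWithinAt
  have hF' : c * 1 + g 0 + -g L < 0 := by linarith
  simpa using hF.eventually_lt_of_neg hF'

theorem stmt12_general (v0 : ℝ → ℝ) (a L vmin : ℝ) (ha : 0 < a) (hL : 2 * a < L)
    (hcont : ContinuousOn v0 (Ici 0))
    (hsupp : ∀ r, a ≤ r → v0 r = 0)
    (hvmin : vmin < 0)
    (hmin : ∀ r, 0 ≤ r → vmin ≤ v0 r)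
    (h0 : v0 0 = vmin)
    (d : ℝ → ℝ)
    (hd : ∀ r, d r = ∫ ρ in (0:ℝ)..r, Real.sqrt (ρ ^ 2 / 4 + v0 ρ - vmin)) :
    d (L - a) < d a + d (L - a) ∧
    sInf ((fun r => L * r / 2 + d r + d (L - r)) '' Ioo 0 a) < d L := by
  simp only [hd]
  set g : ℝ → ℝ := fun ρ => Real.sqrt (ρ ^ 2 / 4 + v0 ρ - vmin)
  have hg : ContinuousOn g (Ici 0) := by fun_prop
  have hda : 0 < ∫ ρ in (0:ℝ)..a, g ρ :=
    intervalIntegral.intervalIntegral_pos_of_pos_on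
      (hg.mono Icc_subset_Ici_self |>.intervalIntegrable_of_Icc ha.le)
      (fun ρ hρ => Real.sqrt_pos.2 (by nlinarith [hmin ρ hρ.1.le, hρ.1])) ha
  refine ⟨by linarith, ?_⟩
  have hc : L / 2 + g 0 < g L := by
    have hgL : g L = Real.sqrt (L ^ 2 / 4 - vmin) := by simp [g, hsupp L (by linarith)]
    rw [hgL, show g 0 = 0 by simp [g, h0], add_zero, Real.lt_sqrt (by linarith)]
    linarith
  have hint_nonneg : ∀ y, 0 ≤ y → 0 ≤ ∫ ρ in (0:ℝ)..y, g ρ := fun y hy =>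
    intervalIntegral.integral_nonneg hy fun _ _ => Real.sqrt_nonneg _
  obtain ⟨r, hr, hra : r ∈ Ioo 0 a⟩ :=
    ((eventually_mul_add_integral_add_integral_lt hg (by linarith) hc).and
      (Ioo_mem_nhdsGT ha)).exists
  refine (csInf_le (⟨0, ?_⟩ : BddBelow _) (mem_image_of_mem _ hra)).trans_lt (by linarith)
  rintro _ ⟨x, ⟨hx0, hxa⟩, rfl⟩
  have := hint_nonneg x hx0.le
  have := hint_nonneg (L - x) (by linarith)
  have := mul_pos (by linarith : 0 < L) hx0
  linarith

/-- with `d(r) = ∫_0^r √(ρ²/4 + v₀(ρ) - v_min) dρ` and the constants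
`S₀ = d(L)`, `S_a = d(a) + d(L-a)`, `Ŝ_a = d(L-a)`,
`Ŝ = inf_{0<r<a} [Lr/2 + d(r) + d(L-r)]`, one has `Ŝ_a < S_a` and `Ŝ < S₀`. -/
theorem stmt12 (v0 : ℝ → ℝ) (a L vmin : ℝ) (ha : 0 < a) (hL : 2 * a < L)
    (hcont : ContinuousOn v0 (Ici 0))
    (hnonpos : ∀ r, 0 ≤ r → v0 r ≤ 0)
    (hsupp : ∀ r, a ≤ r → v0 r = 0)
    (hvmin : vmin < 0)
    (hmin : ∀ r, 0 ≤ r → vmin ≤ v0 r)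
    (h0 : v0 0 = vmin)
    (honly : ∀ r, 0 ≤ r → v0 r = vmin → r = 0)
    (d : ℝ → ℝ)
    (hd : ∀ r, d r = ∫ ρ in (0:ℝ)..r, Real.sqrt (ρ ^ 2 / 4 + v0 ρ - vmin)) :
    d (L - a) < d a + d (L - a) ∧
    sInf ((fun r => L * r / 2 + d r + d (L - r)) '' Ioo 0 a) < d L :=
  stmt12_general v0 a L vmin ha hL hcont hsupp hvmin hmin h0 d hd
end

section
/- Let c > 0, a > 0, L > 0, and define G(t) = (c/2)·ln(1 + 1/t) + (a²/2)·(t + 1/2) for t > 0. Then G attains its minimum on (0,∞) at t* = √(1/4 + c/a²) - 1/2, and G(t*) = (a/4)·√(a² + 4c) + (c/2)·ln((√(a² + 4c) + a)²/(4c)). -/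
/-!
Writing `s = t*`, the constant is `c = a² s (s + 1)`. The inequality `log x ≥ 1 - 1/x`, applied to
`x = (1 + 1/t) / (1 + 1/s)`, gives `G t - G s ≥ a² (t - s)² / (2 (t + 1)) ≥ 0` for all `t > 0`,
while `G'(t) = a²/2 - c / (2 t (t + 1))` vanishes at `s`. The closed form comes from
`s = (√(a² + 4c) - a) / (2a)` and `(√(a² + 4c) - a)(√(a² + 4c) + a) = 4c`.
-/

open Real

noncomputable def objective (c a t : ℝ) : ℝ :=
  c / 2 * log (1 + 1 / t) + a ^ 2 / 2 * (t + 1 / 2)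

theorem hasDerivAt_log_one_add_inv {x : ℝ} (hx : x ≠ 0) (hx1 : x + 1 ≠ 0) :
    HasDerivAt (fun t => log (1 + 1 / t)) (-1 / (x * (x + 1))) x := by
  have hinv : HasDerivAt (fun t : ℝ => 1 + 1 / t) (-(x ^ 2)⁻¹) x := by
    simpa [one_div] using (hasDerivAt_inv hx).const_add (1 : ℝ)
  convert hinv.log (by rw [one_add_div hx]; exact div_ne_zero hx1 hx) using 1
  field_simp

theorem hasDerivAt_objective (c a : ℝ) {x : ℝ} (hx : x ≠ 0) (hx1 : x + 1 ≠ 0) :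
    HasDerivAt (objective c a) (a ^ 2 / 2 - c / (2 * (x * (x + 1)))) x := by
  have hlin : HasDerivAt (fun t : ℝ => a ^ 2 / 2 * (t + 1 / 2)) (a ^ 2 / 2 * 1) x :=
    ((hasDerivAt_id x).add_const _).const_mul _
  exact (((hasDerivAt_log_one_add_inv hx hx1).const_mul (c / 2)).add hlin).congr_deriv (by field_simp; ring)

theorem sub_div_mul_le_log_one_add_inv_sub {s t : ℝ} (hs : 0 < s) (ht : 0 < t) :
    (s - t) / (s * (t + 1)) ≤ log (1 + 1 / t) - log (1 + 1 / s) := by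
  have h := one_sub_inv_le_log_of_pos (x := (1 + 1 / t) / (1 + 1 / s)) (by positivity)
  rw [log_div (by positivity) (by positivity)] at h
  convert h using 1
  field_simp
  ring

theorem sq_div_le_objective_sub {a s t : ℝ} (hs : 0 < s) (ht : 0 < t) :
    a ^ 2 * (t - s) ^ 2 / (2 * (t + 1)) ≤
      objective (a ^ 2 * s * (s + 1)) a t - objective (a ^ 2 * s * (s + 1)) a s := by
  calc a ^ 2 * (t - s) ^ 2 / (2 * (t + 1))
      = a ^ 2 * s * (s + 1) / 2 * ((s - t) / (s * (t + 1))) + a ^ 2 / 2 * (t - s) := by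
        field_simp
        ring
    _ ≤ a ^ 2 * s * (s + 1) / 2 * (log (1 + 1 / t) - log (1 + 1 / s)) + a ^ 2 / 2 * (t - s) := by
        gcongr
        exact sub_div_mul_le_log_one_add_inv_sub hs ht
    _ = _ := by
        unfold objective
        ring

theorem objective_le_objective {a s t : ℝ} (hs : 0 < s) (ht : 0 < t) :
    objective (a ^ 2 * s * (s + 1)) a s ≤ objective (a ^ 2 * s * (s + 1)) a t := by
  have := sq_div_le_objective_sub (a := a) hs ht
  have : 0 ≤ a ^ 2 * (t - s) ^ 2 / (2 * (t + 1)) := by positivity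
  linarith

theorem sqrt_quarter_add_div_sq_sub_half {a : ℝ} (ha : 0 < a) (c : ℝ) :
    √(1 / 4 + c / a ^ 2) - 1 / 2 = (√(a ^ 2 + 4 * c) - a) / (2 * a) := by
  rw [show 1 / 4 + c / a ^ 2 = (a ^ 2 + 4 * c) / (2 * a) ^ 2 by field_simp; ring,
    sqrt_div' _ (by positivity), sqrt_sq (by positivity)]
  field_simp

section CriticalPoint

variable {a c : ℝ} (ha : 0 < a) (hc : 0 < c)
include ha hc

theorem lt_sqrt_sq_add_four_mul : a < √(a ^ 2 + 4 * c) := by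
  rw [lt_sqrt ha.le]
  linarith

theorem sqrt_sub_div_pos : 0 < (√(a ^ 2 + 4 * c) - a) / (2 * a) :=
  div_pos (sub_pos.2 (lt_sqrt_sq_add_four_mul ha hc)) (by positivity)

theorem mul_sqrt_sub_div_mul_add_one :
    a ^ 2 * ((√(a ^ 2 + 4 * c) - a) / (2 * a)) * ((√(a ^ 2 + 4 * c) - a) / (2 * a) + 1) = c := by
  have hr : √(a ^ 2 + 4 * c) ^ 2 = a ^ 2 + 4 * c := sq_sqrt (by positivity)
  field_simp
  linear_combination hr

theorem objective_sqrt_sub_div :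
    objective c a ((√(a ^ 2 + 4 * c) - a) / (2 * a)) =
      a / 4 * √(a ^ 2 + 4 * c) + c / 2 * log ((√(a ^ 2 + 4 * c) + a) ^ 2 / (4 * c)) := by
  have hr : √(a ^ 2 + 4 * c) ^ 2 = a ^ 2 + 4 * c := sq_sqrt (by positivity)
  have hra := sub_pos.2 (lt_sqrt_sq_add_four_mul ha hc)
  have hinv : 1 + 1 / ((√(a ^ 2 + 4 * c) - a) / (2 * a)) = (√(a ^ 2 + 4 * c) + a) ^ 2 / (4 * c) := by
    field_simp
    linear_combination (-(√(a ^ 2 + 4 * c) + a)) * hr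
  unfold objective
  rw [hinv]
  field_simp
  ring

end CriticalPoint

theorem stmt15_general (c a : ℝ) (hc : 0 < c) (ha : 0 < a)
    (G : ℝ → ℝ) (hG : ∀ t, G t = c / 2 * Real.log (1 + 1 / t) + a ^ 2 / 2 * (t + 1 / 2))
    (tstar : ℝ) (ht : tstar = Real.sqrt (1 / 4 + c / a ^ 2) - 1 / 2) :
    0 < tstar ∧ HasDerivAt G 0 tstar ∧ (∀ t, 0 < t → G tstar ≤ G t) ∧
    G tstar = a / 4 * Real.sqrt (a ^ 2 + 4 * c)
      + c / 2 * Real.log ((Real.sqrt (a ^ 2 + 4 * c) + a) ^ 2 / (4 * c)) := by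
  obtain rfl : G = objective c a := funext hG
  rw [sqrt_quarter_add_div_sq_sub_half ha] at ht
  have hpos : 0 < tstar := ht ▸ sqrt_sub_div_pos ha hc
  have hcrit : a ^ 2 * tstar * (tstar + 1) = c := ht ▸ mul_sqrt_sub_div_mul_add_one ha hc
  refine ⟨hpos, ?_, fun t htpos => ?_, ht ▸ objective_sqrt_sub_div ha hc⟩
  · convert hasDerivAt_objective c a hpos.ne' (by positivity) using 1
    rw [← hcrit]
    field_simp
    ring
  · rw [← hcrit]
    exact objective_le_objective hpos htpos

/-- the function `G(t) = (c/2)·ln(1 + 1/t) + (a²/2)·(t + 1/2)` on `(0,∞)`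
attains its minimum at `t* = √(1/4 + c/a²) - 1/2 > 0`, where `G'(t*) = 0`, and
`G(t*) = (a/4)·√(a² + 4c) + (c/2)·ln((√(a² + 4c) + a)²/(4c))`. -/
theorem stmt15 (c a L : ℝ) (hc : 0 < c) (ha : 0 < a) (hL : 0 < L)
    (G : ℝ → ℝ) (hG : ∀ t, G t = c / 2 * Real.log (1 + 1 / t) + a ^ 2 / 2 * (t + 1 / 2))
    (tstar : ℝ) (ht : tstar = Real.sqrt (1 / 4 + c / a ^ 2) - 1 / 2) :
    0 < tstar ∧ HasDerivAt G 0 tstar ∧ (∀ t, 0 < t → G tstar ≤ G t) ∧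
    G tstar = a / 4 * Real.sqrt (a ^ 2 + 4 * c)
      + c / 2 * Real.log ((Real.sqrt (a ^ 2 + 4 * c) + a) ^ 2 / (4 * c)) :=
  stmt15_general c a hc ha G hG tstar ht
end
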